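/- Let γ(z) = ∏_{j<k} (z_j − q² z_k). Under conjugation by multiplication by γ(z), the operator G_{j,j+1}^{±1} = ((q⁻¹z_j − q z_{j+1})/(z_j − z_{j+1}))(K_{j,j+1} − 1) + q^{±1} transforms into g_{j,j+1}^{±1} = γ(z)⁻¹ ∘ G_{j,j+1}^{±1} ∘ γ(z) = ((q z_j − q⁻¹ z_{j+1})/(z_j − z_{j+1}))(1 − K_{j,j+1}) − q^{∓1}. -/

import Mathlib

/-- The exchange operator `K_{j,k}` on functions of `z₁,…,z_N`. -/
def Kex {N : ℕ} (j k : Fin N) (f : (Fin N → ℂ) → ℂ) : (Fin N → ℂ) → ℂ :=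
  fun z => f (z ∘ Equiv.swap j k)

/-- `G_{j,k}^{+1} = ((q⁻¹ z_j − q z_k)/(z_j − z_k)) (K_{j,k} − 1) + q`. -/
noncomputable def Gop {N : ℕ} (q : ℂ) (j k : Fin N) (f : (Fin N → ℂ) → ℂ) :
    (Fin N → ℂ) → ℂ :=
  fun z => (q⁻¹ * z j - q * z k) / (z j - z k) * (Kex j k f z - f z) + q * f z

/-- `G_{j,k}^{-1} = ((q⁻¹ z_j − q z_k)/(z_j − z_k)) (K_{j,k} − 1) + q⁻¹`. -/
noncomputable def GopInv {N : ℕ} (q : ℂ) (j k : Fin N) (f : (Fin N → ℂ) → ℂ) :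
    (Fin N → ℂ) → ℂ :=
  fun z => (q⁻¹ * z j - q * z k) / (z j - z k) * (Kex j k f z - f z) + q⁻¹ * f z

/-- `g_{j,k}^{+1} = ((q z_j − q⁻¹ z_k)/(z_j − z_k)) (1 − K_{j,k}) − q⁻¹`. -/
noncomputable def gop {N : ℕ} (q : ℂ) (j k : Fin N) (f : (Fin N → ℂ) → ℂ) :
    (Fin N → ℂ) → ℂ :=
  fun z => (q * z j - q⁻¹ * z k) / (z j - z k) * (f z - Kex j k f z) - q⁻¹ * f z

/-- `g_{j,k}^{-1} = ((q z_j − q⁻¹ z_k)/(z_j − z_k)) (1 − K_{j,k}) − q`. -/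
noncomputable def gopInv {N : ℕ} (q : ℂ) (j k : Fin N) (f : (Fin N → ℂ) → ℂ) :
    (Fin N → ℂ) → ℂ :=
  fun z => (q * z j - q⁻¹ * z k) / (z j - z k) * (f z - Kex j k f z) - q * f z

/-- `γ(z) = ∏_{j<k} (z_j − q² z_k)`. -/
noncomputable def gammaFac (N : ℕ) (q : ℂ) (z : Fin N → ℂ) : ℂ :=
  ∏ j : Fin N, ∏ k ∈ Finset.univ.filter (fun k => j < k), (z j - q ^ 2 * z k)

/-! The adjacent transposition `s = (j j+1)` permutes the factors `z_a − q² z_b` (`a < b`) of `γ`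
other than the one for `(j, j+1)`, which it turns into `z_{j+1} − q² z_j`. Hence
`γ(s z) = γ(z) (z_{j+1} − q² z_j)/(z_j − q² z_{j+1})`, and conjugating `G^{±1}` by `γ` reduces to a
scalar identity, which holds because `q⁻¹ z_j − q z_{j+1} = q⁻¹ (z_j − q² z_{j+1})`. -/

lemma swap_apply_lt_swap_apply_of_val_succ {N : ℕ} {j k a b : Fin N}
    (hjk : (j : ℕ) + 1 = k) (hab : a < b) (hne : (a, b) ≠ (j, k)) :
    Equiv.swap j k a < Equiv.swap j k b := by
  simp only [ne_eq, Prod.mk.injEq, Fin.ext_iff] at hne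
  rw [Fin.lt_def] at hab ⊢
  simp only [Equiv.swap_apply_def, Fin.ext_iff]
  split_ifs <;> omega

lemma gammaFac_eq_prod_lt_pairs (N : ℕ) (q : ℂ) (z : Fin N → ℂ) :
    gammaFac N q z =
      ∏ p ∈ Finset.univ.filter (fun p : Fin N × Fin N => p.1 < p.2), (z p.1 - q ^ 2 * z p.2) := by
  rw [gammaFac, Finset.prod_filter, ← Finset.univ_product_univ, Finset.prod_product]
  simp only [Finset.prod_filter]

lemma gammaFac_ne_zero {N : ℕ} (q : ℂ) (z : Fin N → ℂ)
    (h : ∀ i k : Fin N, i < k → z i ≠ q ^ 2 * z k) : gammaFac N q z ≠ 0 :=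
  Finset.prod_ne_zero_iff.2 fun i _ => Finset.prod_ne_zero_iff.2 fun k hk =>
    sub_ne_zero.2 (h i k (Finset.mem_filter.1 hk).2)

lemma gammaFac_comp_swap_mul {N : ℕ} (q : ℂ) (z : Fin N → ℂ) {j k : Fin N}
    (hjk : (j : ℕ) + 1 = k) :
    gammaFac N q (z ∘ Equiv.swap j k) * (z j - q ^ 2 * z k)
      = gammaFac N q z * (z k - q ^ 2 * z j) := by
  set P := Finset.univ.filter (fun p : Fin N × Fin N => p.1 < p.2)
  have hjkP : (j, k) ∈ P :=
    Finset.mem_filter.2 ⟨Finset.mem_univ _, Fin.lt_def.2 (show (j : ℕ) < k by omega)⟩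
  have hswap_mem : ∀ p ∈ P.erase (j, k),
      Prod.map (Equiv.swap j k) (Equiv.swap j k) p ∈ P.erase (j, k) := by
    rintro ⟨a, b⟩ hp
    simp only [P, Finset.mem_erase, Finset.mem_filter, Finset.mem_univ, true_and] at hp ⊢
    refine ⟨?_, swap_apply_lt_swap_apply_of_val_succ hjk hp.2 hp.1⟩
    rw [Prod.map_apply, ne_eq, Prod.mk.injEq, Equiv.swap_apply_eq_iff, Equiv.swap_apply_eq_iff,
      Equiv.swap_apply_left, Equiv.swap_apply_right]
    rintro ⟨rfl, rfl⟩
    exact absurd hp.2 (by rw [Fin.lt_def]; omega)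
  have hrest : ∏ p ∈ P.erase (j, k),
      ((z ∘ Equiv.swap j k) p.1 - q ^ 2 * (z ∘ Equiv.swap j k) p.2)
        = ∏ p ∈ P.erase (j, k), (z p.1 - q ^ 2 * z p.2) :=
    Finset.prod_nbij' _ _ hswap_mem hswap_mem (by simp) (by simp) (by simp)
  rw [gammaFac_eq_prod_lt_pairs, gammaFac_eq_prod_lt_pairs, ← Finset.mul_prod_erase P _ hjkP,
    ← Finset.mul_prod_erase P _ hjkP, hrest]
  simp only [Function.comp_apply, Equiv.swap_apply_left, Equiv.swap_apply_right]
  ring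

lemma conj_hecke_coeff (q a b γ F K : ℂ) (hγ : γ ≠ 0) (hab : a ≠ b) (hqb : a - q ^ 2 * b ≠ 0) :
    γ⁻¹ * ((q⁻¹ * a - q * b) / (a - b) * (γ * ((b - q ^ 2 * a) / (a - q ^ 2 * b)) * K - γ * F))
      = (q * a - q⁻¹ * b) / (a - b) * (F - K) - (q + q⁻¹) * F := by
  rcases eq_or_ne q 0 with rfl | hq0
  · simp
  have hab' : a - b ≠ 0 := sub_ne_zero.2 hab
  field_simp
  ring

/-- under conjugation by multiplication by `γ(z) = ∏_{j<k}(z_j − q² z_k)`,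
the operator `G_{j,j+1}^{±1}` becomes
`g_{j,j+1}^{±1} = ((q z_j − q⁻¹ z_{j+1})/(z_j − z_{j+1}))(1 − K_{j,j+1}) − q^{∓1}`
(stated at points where `γ` and its swap do not vanish). -/
theorem gamma_conjugation {N : ℕ} (q : ℂ)
    (j : ℕ) (hj : j + 1 < N) (f : (Fin N → ℂ) → ℂ) (z : Fin N → ℂ)
    (hgen : ∀ i k : Fin N, i ≠ k → z i ≠ q ^ 2 * z k)
    (hne : z ⟨j, by omega⟩ ≠ z ⟨j + 1, hj⟩) :
    (gammaFac N q z)⁻¹ *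
        Gop q ⟨j, by omega⟩ ⟨j + 1, hj⟩ (fun w => gammaFac N q w * f w) z
      = gop q ⟨j, by omega⟩ ⟨j + 1, hj⟩ f z ∧
    (gammaFac N q z)⁻¹ *
        GopInv q ⟨j, by omega⟩ ⟨j + 1, hj⟩ (fun w => gammaFac N q w * f w) z
      = gopInv q ⟨j, by omega⟩ ⟨j + 1, hj⟩ f z := by
  set a : Fin N := ⟨j, by omega⟩
  set b : Fin N := ⟨j + 1, hj⟩
  have hγ : gammaFac N q z ≠ 0 := gammaFac_ne_zero q z fun i k hik => hgen i k hik.ne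
  have hab : z a - q ^ 2 * z b ≠ 0 := sub_ne_zero.2 (hgen a b (by simp [a, b, Fin.ext_iff]))
  have hγ_swap : gammaFac N q (z ∘ Equiv.swap a b)
      = gammaFac N q z * ((z b - q ^ 2 * z a) / (z a - q ^ 2 * z b)) := by
    rw [mul_div_assoc', eq_div_iff hab]
    exact gammaFac_comp_swap_mul q z rfl
  have hconj := conj_hecke_coeff q (z a) (z b) _ (f z) (f (z ∘ Equiv.swap a b)) hγ hne hab
  constructor
  · simp only [Gop, gop, Kex, hγ_swap]
    rw [mul_add, hconj, mul_left_comm, inv_mul_cancel_left₀ hγ]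
    ring
  · simp only [GopInv, gopInv, Kex, hγ_swap]
    rw [mul_add, hconj, mul_left_comm, inv_mul_cancel_left₀ hγ]
    ring
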